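/- arXiv:1603.02527 — 2 statements merged into one kernel-verified Lean document; each statement's English description precedes it below -/
import Mathlib

section
/- Fix T>0, γ>0 and a function δ:(0,1)→(0,∞) with δ(ε)→0 as ε→0. Let M>0 and let {φ_ε}_{ε∈(0,1)}⊂L²(0,T;H) satisfy ‖φ_ε‖²_{L²(0,T;H)}≤M for all ε, and suppose φ_ε converges weakly in L²(0,T;H) to some φ as ε→0. Set Φ_ε := Γ(Q_{δ(ε)}φ_ε). Then for every ρ<1, lim_{ε→0} sup_{t∈[0,T]} ‖Φ_ε(t) − Γ(φ)(t)‖_{H^ρ} = 0. -/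
open MeasureTheory Filter Topology Set

noncomputable section

/-- The nonzero lattice points `ℤ²₀ = ℤ² \ {0}`. -/
abbrev Z2 : Type := {k : ℤ × ℤ // k ≠ 0}

/-- `|k| = √(k₁² + k₂²)`. -/
def knorm (k : Z2) : ℝ := Real.sqrt ((k.val.1 : ℝ) ^ 2 + (k.val.2 : ℝ) ^ 2)

/-- Membership in `H^s`: summability of `|k|^{2s} |a_k|²`. -/
def MemHs (s : ℝ) (a : Z2 → ℂ) : Prop :=
  Summable fun k : Z2 => knorm k ^ (2 * s) * ‖a k‖ ^ 2

/-- The `H^s` norm `(Σ_k |k|^{2s}|a_k|²)^{1/2}`. -/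
def hsNorm (s : ℝ) (a : Z2 → ℂ) : ℝ :=
  Real.sqrt (∑' k : Z2, knorm k ^ (2 * s) * ‖a k‖ ^ 2)

/-- Membership in `L²(0,T;H)`. -/
def MemL2H (T : ℝ) (φ : ℝ → Z2 → ℂ) : Prop :=
  (∀ k : Z2, Measurable fun t => φ t k) ∧
  (∀ t ∈ Icc (0 : ℝ) T, Summable fun k : Z2 => ‖φ t k‖ ^ 2) ∧
  IntegrableOn (fun t => ∑' k : Z2, ‖φ t k‖ ^ 2) (Ioc 0 T)

/-- The `L²(0,T;H)` norm. -/
def L2Hnorm (T : ℝ) (φ : ℝ → Z2 → ℂ) : ℝ :=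
  Real.sqrt (∫ t in Ioc (0 : ℝ) T, ∑' k : Z2, ‖φ t k‖ ^ 2)

/-- `(Γ(φ)(t))_k = ∫₀ᵗ e^{-(t-s)|k|²} φ_k(s) ds`. -/
def Gam (φ : ℝ → Z2 → ℂ) (t : ℝ) (k : Z2) : ℂ :=
  ∫ s in Ioc (0 : ℝ) t, Real.exp (-(t - s) * knorm k ^ 2) • φ s k

/-- The `L²(0,T;H)` inner product `∫₀ᵀ ⟨ψ(t), φ(t)⟩_H dt`. -/
def innerL2 (T : ℝ) (ψ φ : ℝ → Z2 → ℂ) : ℂ :=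
  ∫ t in Ioc (0 : ℝ) T, ∑' k : Z2, (starRingEnd ℂ) (ψ t k) * φ t k

/-- The eigenvalues `λ_k(δ) = (1 + δ|k|^{2γ})^{-1/2}` of `Q_δ`. -/
def lam (γ δ : ℝ) (k : Z2) : ℝ := (1 + δ * knorm k ^ (2 * γ)) ^ (-(1 / 2) : ℝ)

/-- The diagonal operator `Q_δ`. -/
def Qop (γ δ : ℝ) (a : Z2 → ℂ) (k : Z2) : ℂ := lam γ δ k • a k

end

/-!
Fix a mode `k` and write `κ = |k|²`. Then `Γ(ψ)(t)_k = e^{-tκ} ∫₀ᵗ e^{sκ} ψ_k(s) ds`, and by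
Cauchy–Schwarz the primitives `t ↦ ∫₀ᵗ e^{sκ} φ_{ε,k}(s) ds` are ½-Hölder on `[0,T]` uniformly in
`ε`. Testing the weak convergence against `𝟙_{(0,t]}(s) e^{sκ} e_k` gives their convergence for
each `t`, so they converge uniformly on the compact `[0,T]`; since also `λ_k(δ) → 1` as `δ → 0`,
each mode of `Φ_ε - Γ(φ)` tends to `0` uniformly in `t`. For the tail, Cauchy–Schwarz gives
`|Γ(ψ)(t)_k|² ≤ ‖ψ_k‖²_{L²(0,T)} / (2κ)`, so the `k`-th term of the `H^ρ` norm is at most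
`|k|^{2ρ-2}` times a sequence of total mass `≤ M + ‖φ‖²`; as `ρ < 1` the weight tends to `0`.

Uniformity in `t` is expressed as convergence along the filter `𝓝[>] 0 ×ˢ 𝓟 (Icc 0 T)`.
-/

lemma norm_integral_smul_sq_le {α E : Type*} [MeasurableSpace α] [NormedAddCommGroup E]
    [NormedSpace ℝ E] {μ : Measure α} {e : α → ℝ} {g : α → E} (he : MemLp e 2 μ)
    (hg : MemLp g 2 μ) :
    ‖∫ x, e x • g x ∂μ‖ ^ 2 ≤ (∫ x, e x ^ 2 ∂μ) * ∫ x, ‖g x‖ ^ 2 ∂μ := by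
  have holder := integral_mul_le_Lp_mul_Lq_of_nonneg Real.HolderConjugate.two_two
    (ae_of_all _ fun x => norm_nonneg (e x)) (ae_of_all _ fun x => norm_nonneg (g x))
    (by simpa using he.norm) (by simpa using hg.norm)
  calc ‖∫ x, e x • g x ∂μ‖ ^ 2 ≤ (∫ x, ‖e x‖ * ‖g x‖ ∂μ) ^ 2 := by
        gcongr
        simpa only [norm_smul] using norm_integral_le_integral_norm (fun x => e x • g x)
    _ ≤ ((∫ x, ‖e x‖ ^ (2 : ℝ) ∂μ) ^ (1 / 2 : ℝ) *
          (∫ x, ‖g x‖ ^ (2 : ℝ) ∂μ) ^ (1 / 2 : ℝ)) ^ 2 := by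
        gcongr
    _ = (∫ x, e x ^ 2 ∂μ) * ∫ x, ‖g x‖ ^ 2 ∂μ := by
        rw [mul_pow, ← Real.rpow_natCast, ← Real.rpow_natCast (_ ^ _), ← Real.rpow_mul,
          ← Real.rpow_mul] <;> norm_num
        all_goals exact integral_nonneg fun x => by positivity

lemma norm_setIntegral_Ioc_sq_le {E : Type*} [NormedAddCommGroup E] [NormedSpace ℝ E]
    {g : ℝ → E} {x y : ℝ} (hxy : x ≤ y) (hg : MemLp g 2 (volume.restrict (Ioc x y))) :
    ‖∫ s in Ioc x y, g s‖ ^ 2 ≤ (y - x) * ∫ s in Ioc x y, ‖g s‖ ^ 2 := by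
  simpa [Real.volume_Ioc, hxy] using
    norm_integral_smul_sq_le (memLp_const (1 : ℝ)) hg

lemma dist_setIntegral_Ioc_le {E : Type*} [NormedAddCommGroup E] [NormedSpace ℝ E]
    {g : ℝ → E} {a b : ℝ} (hg : MemLp g 2 (volume.restrict (Ioc a b))) {x y : ℝ}
    (hx : x ∈ Icc a b) (hy : y ∈ Icc a b) :
    dist (∫ s in Ioc a x, g s) (∫ s in Ioc a y, g s) ≤
      √(∫ s in Ioc a b, ‖g s‖ ^ 2) * √(dist x y) := by
  wlog hxy : x ≤ y generalizing x y
  · rw [dist_comm, dist_comm x]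
    exact this hy hx (le_of_not_ge hxy)
  have hint : IntegrableOn g (Ioc a b) := hg.integrable one_le_two
  have hsub : Ioc x y ⊆ Ioc a b := Ioc_subset_Ioc hx.1 hy.2
  have hdiff : (∫ s in Ioc a y, g s) - ∫ s in Ioc a x, g s = ∫ s in Ioc x y, g s := by
    rw [← intervalIntegral.integral_of_le hx.1, ← intervalIntegral.integral_of_le hy.1,
      ← intervalIntegral.integral_of_le hxy, intervalIntegral.integral_interval_sub_left]
    · exact (intervalIntegrable_iff_integrableOn_Ioc_of_le hy.1).2
        (hint.mono_set (Ioc_subset_Ioc le_rfl hy.2))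
    · exact (intervalIntegrable_iff_integrableOn_Ioc_of_le hx.1).2
        (hint.mono_set (Ioc_subset_Ioc le_rfl hx.2))
  have hmono : ∫ s in Ioc x y, ‖g s‖ ^ 2 ≤ ∫ s in Ioc a b, ‖g s‖ ^ 2 :=
    setIntegral_mono_set ((memLp_two_iff_integrable_sq_norm hg.1).1 hg)
      (ae_of_all _ fun s => by positivity) hsub.eventuallyLE
  rw [dist_comm, dist_eq_norm, hdiff, Real.dist_eq, abs_of_nonpos (by linarith), neg_sub,
    ← Real.sqrt_mul' _ (by linarith), ← Real.sqrt_sq (norm_nonneg _)]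
  gcongr
  calc ‖∫ s in Ioc x y, g s‖ ^ 2 ≤ (y - x) * ∫ s in Ioc x y, ‖g s‖ ^ 2 :=
        norm_setIntegral_Ioc_sq_le hxy (hg.mono_measure (Measure.restrict_mono hsub le_rfl))
    _ ≤ _ := by rw [mul_comm]; gcongr

lemma tendstoUniformlyOn_of_tendsto_of_modulus {ι X E : Type*} [PseudoMetricSpace X]
    [PseudoMetricSpace E] {l : Filter ι} [l.NeBot] {F : ι → X → E} {f : X → E} {K : Set X}
    (hK : IsCompact K) {ω : ℝ → ℝ} (hω : Tendsto ω (𝓝 0) (𝓝 0))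
    (hF : ∀ᶠ i in l, ∀ x ∈ K, ∀ y ∈ K, dist (F i x) (F i y) ≤ ω (dist x y))
    (hpt : ∀ x ∈ K, Tendsto (F · x) l (𝓝 (f x))) :
    TendstoUniformlyOn F f l K := by
  have hf : ∀ x ∈ K, ∀ y ∈ K, dist (f x) (f y) ≤ ω (dist x y) := fun x hx y hy =>
    le_of_tendsto ((hpt x hx).dist (hpt y hy)) (hF.mono fun i hi => hi x hx y hy)
  rw [Metric.tendstoUniformlyOn_iff]
  intro θ hθ
  have hθ3 : 0 < θ / 3 := by positivity
  obtain ⟨r, hr, hωr⟩ := Metric.eventually_nhds_iff.1 (hω.eventually (gt_mem_nhds hθ3))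
  obtain ⟨net, hnetK, hnet, hcover⟩ := finite_cover_balls_of_compact hK hr
  have hclose : ∀ᶠ i in l, ∀ y ∈ net, dist (f y) (F i y) < θ / 3 :=
    (hnet.eventually_all).2 fun y hy =>
      (tendsto_iff_dist_tendsto_zero.1 (hpt y (hnetK hy))).eventually
        (gt_mem_nhds hθ3) |>.mono fun i hi => by rwa [dist_comm]
  filter_upwards [hF, hclose] with i hFi hclosei x hx
  obtain ⟨y, hy, hxy⟩ := mem_iUnion₂.1 (hcover hx)
  have hω_xy : ω (dist x y) < θ / 3 := hωr (by simpa [abs_of_nonneg dist_nonneg] using hxy)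
  calc dist (f x) (F i x) ≤ dist (f x) (f y) + dist (f y) (F i y) + dist (F i y) (F i x) :=
        dist_triangle4 _ _ _ _
    _ < θ / 3 + θ / 3 + θ / 3 := by
        gcongr
        · exact (hf x hx y (hnetK hy)).trans_lt hω_xy
        · exact hclosei y hy
        · exact (hFi y (hnetK hy) x hx).trans_lt (by rwa [dist_comm])
    _ = θ := by ring

lemma tendsto_tsum_zero_of_le_mul {ι α : Type*} {l : Filter ι} {b c : ι → α → ℝ} {w : α → ℝ}
    {C : ℝ} (hb : ∀ k, Tendsto (b · k) l (𝓝 0)) (hw : Tendsto w cofinite (𝓝 0))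
    (hb0 : ∀ᶠ i in l, 0 ≤ b i) (hc0 : ∀ᶠ i in l, 0 ≤ c i)
    (hbc : ∀ᶠ i in l, ∀ k, b i k ≤ w k * c i k)
    (hC : ∀ᶠ i in l, ∀ s : Finset α, ∑ k ∈ s, c i k ≤ C) :
    Tendsto (fun i => ∑' k, b i k) l (𝓝 0) := by
  refine tendsto_order.2 ⟨fun a ha => hb0.mono fun i hi => ha.trans_le (tsum_nonneg hi), ?_⟩
  intro η hη
  classical
  set θ := η / (4 * (|C| + 1))
  have hθ : 0 < θ := by positivity
  have hS : {k | ¬ w k < θ}.Finite := hw.eventually (gt_mem_nhds hθ)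
  set S := hS.toFinset
  have hhead : ∀ᶠ i in l, ∀ k ∈ S, b i k ≤ η / (4 * (S.card + 1)) :=
    (Finset.eventually_all S).2 fun k _ => ((hb k).eventually (gt_mem_nhds (by positivity))).mono
      fun _ h => h.le
  filter_upwards [hb0, hc0, hbc, hC, hhead] with i hb0i hc0i hbci hCi hheadi
  refine lt_of_le_of_lt (Real.tsum_le_of_sum_le hb0i fun s => ?_) (half_lt_self hη)
  rw [← Finset.sum_filter_add_sum_filter_not s (fun k => w k < θ)]
  have hsmall : ∑ k ∈ s with w k < θ, b i k ≤ η / 4 :=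
    calc ∑ k ∈ s with w k < θ, b i k ≤ ∑ k ∈ s with w k < θ, θ * c i k :=
          Finset.sum_le_sum fun k hk =>
            (hbci k).trans (by gcongr; exacts [hc0i k, (Finset.mem_filter.1 hk).2.le])
      _ ≤ θ * (|C| + 1) := by
          rw [← Finset.mul_sum]; gcongr; linarith [hCi (s.filter (w · < θ)), le_abs_self C]
      _ = η / 4 := by simp only [θ]; field_simp
  have hlarge : ∑ k ∈ s with ¬ w k < θ, b i k ≤ η / 4 :=
    calc ∑ k ∈ s with ¬ w k < θ, b i k ≤ ∑ k ∈ s with ¬ w k < θ, η / (4 * (S.card + 1)) :=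
          Finset.sum_le_sum fun k hk =>
            hheadi k (hS.mem_toFinset.2 (Finset.mem_filter.1 hk).2)
      _ ≤ (S.card + 1) * (η / (4 * (S.card + 1))) := by
          rw [Finset.sum_const, nsmul_eq_mul]
          gcongr
          have : (s.filter (¬ w · < θ)).card ≤ S.card :=
            Finset.card_le_card fun k hk => hS.mem_toFinset.2 (Finset.mem_filter.1 hk).2
          exact_mod_cast this.trans (Nat.le_succ _)
      _ = η / 4 := by field_simp
  linarith

lemma norm_val_le_knorm (k : Z2) : ‖(k : ℤ × ℤ)‖ ≤ knorm k := by
  rw [Prod.norm_def, Int.norm_eq_abs, Int.norm_eq_abs]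
  exact max_le (Real.abs_le_sqrt (by nlinarith)) (Real.abs_le_sqrt (by nlinarith))

lemma knorm_pos (k : Z2) : 0 < knorm k :=
  (norm_pos_iff.2 k.2).trans_le (norm_val_le_knorm k)

lemma tendsto_knorm_cofinite : Tendsto knorm cofinite atTop := by
  refine tendsto_atTop_mono norm_val_le_knorm (tendsto_norm_cocompact_atTop.comp ?_)
  rw [cocompact_eq_cofinite]
  exact Subtype.val_injective.tendsto_cofinite

lemma tendsto_knorm_rpow_cofinite {r : ℝ} (hr : r < 0) :
    Tendsto (fun k => knorm k ^ r) cofinite (𝓝 0) := by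
  simpa [Function.comp_def] using
    (tendsto_rpow_neg_atTop (neg_pos.2 hr)).comp tendsto_knorm_cofinite

lemma abs_lam_le_one {γ d : ℝ} (hd : 0 ≤ d) (k : Z2) : |lam γ d k| ≤ 1 := by
  have hbase : 1 ≤ 1 + d * knorm k ^ (2 * γ) :=
    le_add_of_nonneg_right (mul_nonneg hd (Real.rpow_nonneg (knorm_pos k).le _))
  rw [lam, abs_of_nonneg (Real.rpow_nonneg (by linarith) _)]
  exact Real.rpow_le_one_of_one_le_of_nonpos hbase (by norm_num)

lemma tendsto_lam (γ : ℝ) (k : Z2) : Tendsto (fun d => lam γ d k) (𝓝 0) (𝓝 1) := by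
  have h : Tendsto (fun d : ℝ => 1 + d * knorm k ^ (2 * γ)) (𝓝 0) (𝓝 1) := by
    simpa using ((tendsto_id (x := 𝓝 (0 : ℝ))).mul_const (knorm k ^ (2 * γ))).const_add 1
  simpa [lam] using h.rpow_const (p := -(1 / 2)) (Or.inl one_ne_zero)

lemma Gam_Qop (γ d : ℝ) (ψ : ℝ → Z2 → ℂ) (t : ℝ) (k : Z2) :
    Gam (fun s => Qop γ d (ψ s)) t k = lam γ d k • Gam ψ t k := by
  simp only [Gam, Qop, ← integral_smul, smul_comm (lam γ d k)]

lemma Gam_eq_exp_smul (ψ : ℝ → Z2 → ℂ) (t : ℝ) (k : Z2) :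
    Gam ψ t k = Real.exp (-(t * knorm k ^ 2)) •
      ∫ s in Ioc 0 t, Real.exp (s * knorm k ^ 2) • ψ s k := by
  simp only [Gam, ← integral_smul, smul_smul, ← Real.exp_add]
  congr 1 with s
  ring_nf

noncomputable def modeEnergy (T : ℝ) (ψ : ℝ → Z2 → ℂ) (k : Z2) : ℝ := ∫ s in Ioc 0 T, ‖ψ s k‖ ^ 2

lemma modeEnergy_nonneg (T : ℝ) (ψ : ℝ → Z2 → ℂ) (k : Z2) : 0 ≤ modeEnergy T ψ k :=
  integral_nonneg fun _ => sq_nonneg _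

lemma integral_exp_sq_Ioc_le {κ : ℝ} (hκ : 0 < κ) (t : ℝ) :
    ∫ s in Ioc 0 t, Real.exp (s * κ) ^ 2 ≤ Real.exp (t * κ) ^ 2 / (2 * κ) := by
  have hsq : ∀ s, Real.exp (s * κ) ^ 2 = Real.exp (2 * κ * s) := fun s => by
    rw [← Real.exp_nat_mul]; ring_nf
  simp only [hsq]
  rw [← integral_exp_mul_Iic (by positivity) t]
  exact setIntegral_mono_set (integrableOn_exp_mul_Iic (by positivity) t)
    (ae_of_all _ fun _ => (Real.exp_pos _).le) Ioc_subset_Iic_self.eventuallyLE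

namespace MemL2H

variable {T : ℝ} {ψ : ℝ → Z2 → ℂ}

lemma integrableOn_sq (hψ : MemL2H T ψ) (k : Z2) :
    IntegrableOn (fun s => ‖ψ s k‖ ^ 2) (Ioc 0 T) := by
  refine hψ.2.2.mono' ((hψ.1 k).norm.pow_const 2).aestronglyMeasurable ?_
  filter_upwards [ae_restrict_mem measurableSet_Ioc] with s hs
  rw [Real.norm_of_nonneg (sq_nonneg _)]
  exact (hψ.2.1 s (Ioc_subset_Icc_self hs)).le_tsum k fun j _ => sq_nonneg _

lemma memLp (hψ : MemL2H T ψ) (k : Z2) : MemLp (ψ · k) 2 (volume.restrict (Ioc 0 T)) :=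
  (memLp_two_iff_integrable_sq_norm (hψ.1 k).aestronglyMeasurable).2 (hψ.integrableOn_sq k)

lemma sum_modeEnergy_le (hψ : MemL2H T ψ) (u : Finset Z2) :
    ∑ k ∈ u, modeEnergy T ψ k ≤ L2Hnorm T ψ ^ 2 := by
  rw [L2Hnorm, Real.sq_sqrt (integral_nonneg fun t => tsum_nonneg fun k => sq_nonneg _)]
  simp only [modeEnergy]
  rw [← integral_finsetSum u fun k _ => hψ.integrableOn_sq k]
  refine integral_mono_ae (integrable_finsetSum u fun k _ => hψ.integrableOn_sq k) hψ.2.2 ?_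
  filter_upwards [ae_restrict_mem measurableSet_Ioc] with s hs
  exact (hψ.2.1 s (Ioc_subset_Icc_self hs)).sum_le_tsum u fun j _ => sq_nonneg _

lemma memLp_exp_smul (hψ : MemL2H T ψ) (k : Z2) :
    MemLp (fun s => Real.exp (s * knorm k ^ 2) • ψ s k) 2 (volume.restrict (Ioc 0 T)) := by
  refine (hψ.memLp k).of_le_mul (c := Real.exp (T * knorm k ^ 2)) ?_ ?_
  · exact ((Real.continuous_exp.comp (continuous_id.mul continuous_const)).measurable.smul
      (hψ.1 k)).aestronglyMeasurable
  · filter_upwards [ae_restrict_mem measurableSet_Ioc] with s hs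
    rw [norm_smul, Real.norm_of_nonneg (Real.exp_pos _).le]
    gcongr
    exact hs.2

lemma integral_norm_exp_smul_sq_le (hψ : MemL2H T ψ) (k : Z2) :
    ∫ s in Ioc 0 T, ‖Real.exp (s * knorm k ^ 2) • ψ s k‖ ^ 2 ≤
      Real.exp (T * knorm k ^ 2) ^ 2 * modeEnergy T ψ k := by
  rw [modeEnergy, ← integral_const_mul]
  refine setIntegral_mono_on ?_ ((hψ.integrableOn_sq k).const_mul _) measurableSet_Ioc
    fun s hs => ?_
  · exact (memLp_two_iff_integrable_sq_norm (hψ.memLp_exp_smul k).1).1 (hψ.memLp_exp_smul k)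
  · rw [norm_smul, Real.norm_of_nonneg (Real.exp_pos _).le, mul_pow]
    gcongr
    exact hs.2

lemma norm_Gam_sq_le (hψ : MemL2H T ψ) (k : Z2) {t : ℝ} (ht : t ∈ Icc 0 T) :
    ‖Gam ψ t k‖ ^ 2 ≤ modeEnergy T ψ k / (2 * knorm k ^ 2) := by
  have hκ : 0 < knorm k ^ 2 := pow_pos (knorm_pos k) 2
  have hsub : Ioc 0 t ⊆ Ioc 0 T := Ioc_subset_Ioc le_rfl ht.2
  have hexp : MemLp (fun s => Real.exp (s * knorm k ^ 2)) 2 (volume.restrict (Ioc 0 t)) :=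
    .of_bound (by fun_prop : Continuous fun s => Real.exp (s * knorm k ^ 2)).aestronglyMeasurable
      _ (ae_restrict_of_forall_mem measurableSet_Ioc fun s hs => by
        rw [Real.norm_of_nonneg (Real.exp_pos _).le]
        exact Real.exp_le_exp.2 (mul_le_mul_of_nonneg_right hs.2 hκ.le))
  have hcs := norm_integral_smul_sq_le hexp
    ((hψ.memLp k).mono_measure (Measure.restrict_mono hsub le_rfl))
  have henergy : ∫ s in Ioc 0 t, ‖ψ s k‖ ^ 2 ≤ modeEnergy T ψ k :=
    setIntegral_mono_set (hψ.integrableOn_sq k) (ae_of_all _ fun _ => sq_nonneg _)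
      hsub.eventuallyLE
  rw [Gam_eq_exp_smul, norm_smul, mul_pow, Real.norm_of_nonneg (Real.exp_pos _).le]
  calc Real.exp (-(t * knorm k ^ 2)) ^ 2 *
        ‖∫ s in Ioc 0 t, Real.exp (s * knorm k ^ 2) • ψ s k‖ ^ 2
      ≤ Real.exp (-(t * knorm k ^ 2)) ^ 2 *
          (Real.exp (t * knorm k ^ 2) ^ 2 / (2 * knorm k ^ 2) * modeEnergy T ψ k) := by
        gcongr
        refine hcs.trans (mul_le_mul (integral_exp_sq_Ioc_le hκ t) henergy
          (integral_nonneg fun _ => sq_nonneg _) (by positivity))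
    _ = modeEnergy T ψ k / (2 * knorm k ^ 2) := by
        rw [Real.exp_neg]
        field_simp

lemma dist_integral_exp_smul_le (hψ : MemL2H T ψ) (k : Z2) {x y : ℝ} (hx : x ∈ Icc 0 T)
    (hy : y ∈ Icc 0 T) :
    dist (∫ s in Ioc 0 x, Real.exp (s * knorm k ^ 2) • ψ s k)
        (∫ s in Ioc 0 y, Real.exp (s * knorm k ^ 2) • ψ s k) ≤
      Real.exp (T * knorm k ^ 2) * L2Hnorm T ψ * √(dist x y) := by
  refine (dist_setIntegral_Ioc_le (hψ.memLp_exp_smul k) hx hy).trans ?_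
  gcongr
  refine Real.sqrt_le_iff.2 ⟨mul_nonneg (Real.exp_pos _).le (Real.sqrt_nonneg _), ?_⟩
  rw [mul_pow]
  exact (hψ.integral_norm_exp_smul_sq_le k).trans (by gcongr; simpa using hψ.sum_modeEnergy_le {k})

end MemL2H

lemma memL2H_single {T : ℝ} {f : ℝ → ℂ} (hf : Measurable f)
    (hf2 : IntegrableOn (fun s => ‖f s‖ ^ 2) (Ioc 0 T)) (k : Z2) :
    MemL2H T (fun s => Pi.single k (f s)) := by
  have hsq : ∀ s, (fun j => ‖(Pi.single k (f s) : Z2 → ℂ) j‖ ^ 2) =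
      Pi.single k (‖f s‖ ^ 2) := fun s => by
    ext j
    rcases eq_or_ne j k with rfl | hjk <;> simp [*]
  refine ⟨fun j => ?_, fun s _ => ?_, ?_⟩
  · rcases eq_or_ne j k with rfl | hjk
    · simpa using hf
    · simp [hjk]
  · rw [hsq]
    exact (hasSum_pi_single k _).summable
  · simpa only [hsq, tsum_pi_single] using hf2

lemma innerL2_single (T : ℝ) (f : ℝ → ℂ) (k : Z2) (χ : ℝ → Z2 → ℂ) :
    innerL2 T (fun s => Pi.single k (f s)) χ =
      ∫ s in Ioc 0 T, (starRingEnd ℂ) (f s) * χ s k := by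
  have h : ∀ s, (fun j => (starRingEnd ℂ) ((Pi.single k (f s) : Z2 → ℂ) j) * χ s j) =
      Pi.single k ((starRingEnd ℂ) (f s) * χ s k) := fun s => by
    ext j
    rcases eq_or_ne j k with rfl | hjk <;> simp [*]
  simp only [innerL2, h, tsum_pi_single]

lemma tendsto_integral_exp_smul {T : ℝ} {φ : ℝ → ℝ → Z2 → ℂ} {φlim : ℝ → Z2 → ℂ}
    (hweak : ∀ ψ : ℝ → Z2 → ℂ, MemL2H T ψ →
      Tendsto (fun ε => innerL2 T ψ (φ ε)) (𝓝[>] 0) (𝓝 (innerL2 T ψ φlim)))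
    (k : Z2) {t : ℝ} (ht : t ∈ Icc 0 T) :
    Tendsto (fun ε => ∫ s in Ioc 0 t, Real.exp (s * knorm k ^ 2) • φ ε s k) (𝓝[>] 0)
      (𝓝 (∫ s in Ioc 0 t, Real.exp (s * knorm k ^ 2) • φlim s k)) := by
  set f : ℝ → ℂ := (Ioc 0 t).indicator fun s => (Real.exp (s * knorm k ^ 2) : ℂ)
  have hf : Measurable f := (Complex.measurable_ofReal.comp
    (Real.continuous_exp.comp (continuous_id.mul continuous_const)).measurable).indicator
    measurableSet_Ioc
  have hf2 : IntegrableOn (fun s => ‖f s‖ ^ 2) (Ioc 0 T) := by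
    refine Measure.integrableOn_of_bounded (M := Real.exp (T * knorm k ^ 2) ^ 2)
      measure_Ioc_lt_top.ne (hf.norm.pow_const 2).aestronglyMeasurable ?_
    filter_upwards [ae_restrict_mem measurableSet_Ioc] with s hs
    rw [Real.norm_of_nonneg (sq_nonneg _)]
    calc ‖f s‖ ^ 2 ≤ ‖(Real.exp (s * knorm k ^ 2) : ℂ)‖ ^ 2 := by
          gcongr; exact norm_indicator_le_norm_self _ _
      _ ≤ Real.exp (T * knorm k ^ 2) ^ 2 := by
          rw [Complex.norm_real, Real.norm_of_nonneg (Real.exp_pos _).le]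
          gcongr; exact hs.2
  have hinner : ∀ χ : ℝ → Z2 → ℂ, innerL2 T (fun s => Pi.single k (f s)) χ =
      ∫ s in Ioc 0 t, Real.exp (s * knorm k ^ 2) • χ s k := fun χ => by
    have h : ∀ s, (starRingEnd ℂ) (f s) * χ s k =
        (Ioc 0 t).indicator (fun s => Real.exp (s * knorm k ^ 2) • χ s k) s := fun s => by
      by_cases hs : s ∈ Ioc 0 t <;>
        simp only [f, indicator_apply, hs, if_true, if_false, Complex.conj_ofReal,
          Complex.real_smul, map_zero, zero_mul]
    simp only [innerL2_single, h, setIntegral_indicator measurableSet_Ioc, Ioc_inter_Ioc,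
      max_self, min_eq_right ht.2]
  simpa only [hinner] using hweak _ (memL2H_single hf hf2 k)

section Modes

variable {T γ M : ℝ} {δ : ℝ → ℝ} {φ : ℝ → ℝ → Z2 → ℂ} {φlim : ℝ → Z2 → ℂ}

lemma tendstoUniformlyOn_Gam (hφ : ∀ ε ∈ Ioo (0 : ℝ) 1, MemL2H T (φ ε))
    (hbound : ∀ ε ∈ Ioo (0 : ℝ) 1, (L2Hnorm T (φ ε)) ^ 2 ≤ M)
    (hweak : ∀ ψ : ℝ → Z2 → ℂ, MemL2H T ψ →
      Tendsto (fun ε => innerL2 T ψ (φ ε)) (𝓝[>] 0) (𝓝 (innerL2 T ψ φlim)))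
    (k : Z2) :
    TendstoUniformlyOn (fun ε t => Gam (φ ε) t k) (Gam φlim · k) (𝓝[>] 0) (Icc 0 T) := by
  set C := Real.exp (T * knorm k ^ 2) * √M
  have hprim : TendstoUniformlyOn
      (fun ε t => ∫ s in Ioc 0 t, Real.exp (s * knorm k ^ 2) • φ ε s k)
      (fun t => ∫ s in Ioc 0 t, Real.exp (s * knorm k ^ 2) • φlim s k) (𝓝[>] 0) (Icc 0 T) := by
    refine tendstoUniformlyOn_of_tendsto_of_modulus isCompact_Icc (ω := fun d => C * √d)
      (by simpa using (Real.continuous_sqrt.tendsto 0).const_mul C) ?_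
      fun t ht => tendsto_integral_exp_smul hweak k ht
    filter_upwards [Ioo_mem_nhdsGT one_pos] with ε hε x hx y hy
    refine ((hφ ε hε).dist_integral_exp_smul_le k hx hy).trans ?_
    gcongr
    exact mul_le_mul_of_nonneg_left (Real.le_sqrt_of_sq_le (hbound ε hε)) (Real.exp_pos _).le
  rw [Metric.tendstoUniformlyOn_iff] at hprim ⊢
  intro θ hθ
  filter_upwards [hprim θ hθ] with ε hε t ht
  rw [Gam_eq_exp_smul, Gam_eq_exp_smul, dist_smul₀, Real.norm_of_nonneg (Real.exp_pos _).le]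
  refine (mul_le_of_le_one_left dist_nonneg ?_).trans_lt (hε t ht)
  exact Real.exp_le_one_iff.2 (neg_nonpos.2 (mul_nonneg ht.1 (sq_nonneg _)))

lemma tendsto_Gam_Qop_sub_Gam (hδ0 : Tendsto δ (𝓝[>] 0) (𝓝 0))
    (hφ : ∀ ε ∈ Ioo (0 : ℝ) 1, MemL2H T (φ ε)) (hφlim : MemL2H T φlim)
    (hbound : ∀ ε ∈ Ioo (0 : ℝ) 1, (L2Hnorm T (φ ε)) ^ 2 ≤ M)
    (hweak : ∀ ψ : ℝ → Z2 → ℂ, MemL2H T ψ →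
      Tendsto (fun ε => innerL2 T ψ (φ ε)) (𝓝[>] 0) (𝓝 (innerL2 T ψ φlim)))
    (k : Z2) :
    Tendsto (fun p : ℝ × ℝ => Gam (fun s => Qop γ (δ p.1) (φ p.1 s)) p.2 k - Gam φlim p.2 k)
      (𝓝[>] 0 ×ˢ 𝓟 (Icc 0 T)) (𝓝 0) := by
  have hGam : Tendsto (fun p : ℝ × ℝ => Gam (φ p.1) p.2 k - Gam φlim p.2 k)
      (𝓝[>] 0 ×ˢ 𝓟 (Icc 0 T)) (𝓝 0) := by
    have h := tendsto_uniformity_iff_dist_tendsto_zero.1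
      (tendstoUniformlyOn_iff_tendsto.1 (tendstoUniformlyOn_Gam hφ hbound hweak k))
    rw [tendsto_zero_iff_norm_tendsto_zero]
    convert h using 2 with p
    rw [dist_eq_norm']
  have hlam : Tendsto (fun p : ℝ × ℝ => lam γ (δ p.1) k) (𝓝[>] 0 ×ˢ 𝓟 (Icc 0 T)) (𝓝 1) :=
    (tendsto_lam γ k).comp (hδ0.comp tendsto_fst)
  have hbdd : IsBoundedUnder (· ≤ ·) (𝓝[>] 0 ×ˢ 𝓟 (Icc 0 T))
      (norm ∘ fun p : ℝ × ℝ => Gam φlim p.2 k) := by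
    refine isBoundedUnder_of_eventually_le (a := √(modeEnergy T φlim k / (2 * knorm k ^ 2))) ?_
    refine eventually_prod_principal_iff.2 (Eventually.of_forall fun _ t ht => ?_)
    exact Real.le_sqrt_of_sq_le (hφlim.norm_Gam_sq_le k ht)
  have h := (hlam.smul hGam).add ((by simpa using hlam.sub_const 1 :
    Tendsto (fun p : ℝ × ℝ => lam γ (δ p.1) k - 1) _ (𝓝 0)).zero_smul_isBoundedUnder_le hbdd)
  rw [smul_zero, zero_add] at h
  refine h.congr fun p => ?_
  rw [Gam_Qop, smul_sub, sub_smul, one_smul]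
  abel

lemma knorm_rpow_mul_norm_Gam_Qop_sub_sq_le {ψ χ : ℝ → Z2 → ℂ} (hψ : MemL2H T ψ)
    (hχ : MemL2H T χ) {d : ℝ} (hd : 0 ≤ d) (ρ : ℝ) (k : Z2) {t : ℝ} (ht : t ∈ Icc 0 T) :
    knorm k ^ (2 * ρ) * ‖Gam (fun s => Qop γ d (ψ s)) t k - Gam χ t k‖ ^ 2 ≤
      knorm k ^ (2 * ρ - 2) * (modeEnergy T ψ k + modeEnergy T χ k) := by
  have hκ : 0 < knorm k ^ 2 := pow_pos (knorm_pos k) 2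
  have hnorm : ‖Gam (fun s => Qop γ d (ψ s)) t k - Gam χ t k‖ ≤ ‖Gam ψ t k‖ + ‖Gam χ t k‖ := by
    rw [Gam_Qop]
    refine (norm_sub_le _ _).trans ?_
    gcongr
    rw [norm_smul, Real.norm_eq_abs]
    exact mul_le_of_le_one_left (norm_nonneg _) (abs_lam_le_one hd k)
  have hsq : ‖Gam (fun s => Qop γ d (ψ s)) t k - Gam χ t k‖ ^ 2 ≤
      (modeEnergy T ψ k + modeEnergy T χ k) / knorm k ^ 2 := by
    have h1 := hψ.norm_Gam_sq_le k ht
    have h2 := hχ.norm_Gam_sq_le k ht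
    have : (modeEnergy T ψ k + modeEnergy T χ k) / knorm k ^ 2 =
        2 * (modeEnergy T ψ k / (2 * knorm k ^ 2)) +
          2 * (modeEnergy T χ k / (2 * knorm k ^ 2)) := by
      field_simp
    rw [this]
    nlinarith [norm_nonneg (Gam (fun s => Qop γ d (ψ s)) t k - Gam χ t k),
      sq_nonneg (‖Gam ψ t k‖ - ‖Gam χ t k‖)]
  have hpow : knorm k ^ (2 * ρ) = knorm k ^ (2 * ρ - 2) * knorm k ^ 2 := by
    rw [← Real.rpow_natCast, ← Real.rpow_add (knorm_pos k)]
    norm_num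
  calc knorm k ^ (2 * ρ) * ‖Gam (fun s => Qop γ d (ψ s)) t k - Gam χ t k‖ ^ 2
      = knorm k ^ (2 * ρ - 2) * (‖Gam (fun s => Qop γ d (ψ s)) t k - Gam χ t k‖ ^ 2 *
          knorm k ^ 2) := by rw [hpow]; ring
    _ ≤ knorm k ^ (2 * ρ - 2) * (modeEnergy T ψ k + modeEnergy T χ k) :=
        mul_le_mul_of_nonneg_left ((le_div_iff₀ hκ).1 hsq) (Real.rpow_nonneg (knorm_pos k).le _)

end Modes

theorem stmt3_general (T γ : ℝ)
    (δ : ℝ → ℝ) (hδpos : ∀ ε ∈ Ioo (0 : ℝ) 1, 0 < δ ε)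
    (hδ0 : Tendsto δ (𝓝[>] 0) (𝓝 0))
    (M : ℝ)
    (φ : ℝ → ℝ → Z2 → ℂ) (φlim : ℝ → Z2 → ℂ)
    (hφ : ∀ ε ∈ Ioo (0 : ℝ) 1, MemL2H T (φ ε))
    (hφlim : MemL2H T φlim)
    (hbound : ∀ ε ∈ Ioo (0 : ℝ) 1, (L2Hnorm T (φ ε)) ^ 2 ≤ M)
    (hweak : ∀ ψ : ℝ → Z2 → ℂ, MemL2H T ψ →
      Tendsto (fun ε => innerL2 T ψ (φ ε)) (𝓝[>] 0) (𝓝 (innerL2 T ψ φlim))) :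
    ∀ ρ < (1 : ℝ), ∀ η > (0 : ℝ), ∃ ε₀ > (0 : ℝ), ∀ ε ∈ Ioo (0 : ℝ) 1, ε < ε₀ →
      ∀ t ∈ Icc (0 : ℝ) T,
        hsNorm ρ (fun k => Gam (fun s => Qop γ (δ ε) (φ ε s)) t k - Gam φlim t k) < η := by
  intro ρ hρ η hη
  have hL : ∀ᶠ p : ℝ × ℝ in 𝓝[>] 0 ×ˢ 𝓟 (Icc 0 T), p.1 ∈ Ioo 0 1 ∧ p.2 ∈ Icc 0 T :=
    eventually_prod_principal_iff.2
      (Eventually.mono (Ioo_mem_nhdsGT one_pos) fun _ hε _ ht => ⟨hε, ht⟩)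
  have hsum : Tendsto (fun p : ℝ × ℝ => ∑' k, knorm k ^ (2 * ρ) *
      ‖Gam (fun s => Qop γ (δ p.1) (φ p.1 s)) p.2 k - Gam φlim p.2 k‖ ^ 2)
      (𝓝[>] 0 ×ˢ 𝓟 (Icc 0 T)) (𝓝 0) :=
    tendsto_tsum_zero_of_le_mul (c := fun p k => modeEnergy T (φ p.1) k + modeEnergy T φlim k)
      (fun k => by
        simpa using ((tendsto_Gam_Qop_sub_Gam hδ0 hφ hφlim hbound hweak k).norm.pow 2).const_mul
          (knorm k ^ (2 * ρ)))
      (tendsto_knorm_rpow_cofinite (by linarith))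
      (Eventually.of_forall fun _ k =>
        mul_nonneg (Real.rpow_nonneg (knorm_pos k).le _) (sq_nonneg _))
      (Eventually.of_forall fun _ k =>
        add_nonneg (modeEnergy_nonneg _ _ k) (modeEnergy_nonneg _ _ k))
      (hL.mono fun p hp k =>
        knorm_rpow_mul_norm_Gam_Qop_sub_sq_le (hφ _ hp.1) hφlim (hδpos _ hp.1).le ρ k hp.2)
      (hL.mono fun p hp s => by
        rw [Finset.sum_add_distrib]
        exact add_le_add (((hφ _ hp.1).sum_modeEnergy_le s).trans (hbound _ hp.1))
          (hφlim.sum_modeEnergy_le s))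
  have hsmall : ∀ᶠ p : ℝ × ℝ in 𝓝[>] 0 ×ˢ 𝓟 (Icc 0 T),
      hsNorm ρ (fun k => Gam (fun s => Qop γ (δ p.1) (φ p.1 s)) p.2 k - Gam φlim p.2 k) < η :=
    hsum.sqrt.eventually (gt_mem_nhds (by rwa [Real.sqrt_zero]))
  obtain ⟨ε₀, hε₀, hsub⟩ :=
    mem_nhdsGT_iff_exists_Ioo_subset.1 (eventually_prod_principal_iff.1 hsmall)
  exact ⟨ε₀, hε₀, fun ε hε hεε₀ t ht => hsub ⟨hε.1, hεε₀⟩ t ht⟩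

/-- if `δ(ε) → 0`, the `φ_ε` are bounded in `L²(0,T;H)` and converge weakly to
`φ`, then `Φ_ε = Γ(Q_{δ(ε)}φ_ε)` converges to `Γ(φ)` uniformly on `[0,T]` in `H^ρ`,
for every `ρ < 1`. -/
theorem stmt3 (T γ : ℝ) (hT : 0 < T) (hγ : 0 < γ)
    (δ : ℝ → ℝ) (hδpos : ∀ ε ∈ Ioo (0 : ℝ) 1, 0 < δ ε)
    (hδ0 : Tendsto δ (𝓝[>] 0) (𝓝 0))
    (M : ℝ) (hM : 0 < M)
    (φ : ℝ → ℝ → Z2 → ℂ) (φlim : ℝ → Z2 → ℂ)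
    (hφ : ∀ ε ∈ Ioo (0 : ℝ) 1, MemL2H T (φ ε))
    (hφlim : MemL2H T φlim)
    (hbound : ∀ ε ∈ Ioo (0 : ℝ) 1, (L2Hnorm T (φ ε)) ^ 2 ≤ M)
    (hweak : ∀ ψ : ℝ → Z2 → ℂ, MemL2H T ψ →
      Tendsto (fun ε => innerL2 T ψ (φ ε)) (𝓝[>] 0) (𝓝 (innerL2 T ψ φlim))) :
    ∀ ρ < (1 : ℝ), ∀ η > (0 : ℝ), ∃ ε₀ > (0 : ℝ), ∀ ε ∈ Ioo (0 : ℝ) 1, ε < ε₀ →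
      ∀ t ∈ Icc (0 : ℝ) T,
        hsNorm ρ (fun k => Gam (fun s => Qop γ (δ ε) (φ ε s)) t k - Gam φlim t k) < η :=
  stmt3_general T γ δ hδpos hδ0 M φ φlim hφ hφlim hbound hweak
end

section
/- For every γ>0 there exists a constant C>0 such that for all δ∈(0,1]: Σ_{k∈ℤ²₀} 1/(|k|²(1+δ|k|^{2γ})) ≤ C(1+log(1/δ)). In particular the sum is finite for every δ>0. -/
/-!
Since `max(|k₁|, |k₂|) ≤ |k|` and the square shell `max(|k₁|, |k₂|) = n` holds `8n` lattice points,
the lattice sum is at most `8 Σₙ 1/(n(1 + δn^{2γ}))`. Comparing this series with the integral of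
`1/(x(1 + δx^{2γ}))` over `[1, ∞)`, whose antiderivative `log x - log(1 + δx^{2γ})/(2γ)` is bounded
above by `log(1/δ)/(2γ)`, bounds it by `1 + (log(1/δ) + δ)/(2γ)`.
-/

open MeasureTheory Filter Topology Set

section Series

variable {a δ : ℝ}

lemma antitoneOn_one_div_pow_mul_one_add_rpow (p : ℕ) (hδ : 0 ≤ δ) (ha : 0 ≤ a) :
    AntitoneOn (fun x : ℝ => 1 / (x ^ p * (1 + δ * x ^ a))) (Ioi 0) := by
  intro x (hx : 0 < x) y (hy : 0 < y) hxy
  apply one_div_le_one_div_of_le (by positivity)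
  gcongr

lemma hasDerivAt_log_sub_log_one_add_rpow_div (ha : a ≠ 0) (hδ : 0 ≤ δ) {x : ℝ} (hx : 0 < x) :
    HasDerivAt (fun x => Real.log x - Real.log (1 + δ * x ^ a) / a)
      (1 / (x * (1 + δ * x ^ a))) x := by
  have hpos : 0 < 1 + δ * x ^ a := by positivity
  have hrpow := ((Real.hasDerivAt_rpow_const (p := a) (Or.inl hx.ne')).const_mul δ).const_add 1
  refine ((Real.hasDerivAt_log hx.ne').sub ((hrpow.log hpos.ne').div_const a)).congr_deriv ?_
  rw [Real.rpow_sub_one hx.ne']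
  field_simp
  ring

lemma log_sub_log_one_add_rpow_div_le (ha : 0 < a) (hδ : 0 < δ) {x : ℝ} (hx : 0 < x) :
    Real.log x - Real.log (1 + δ * x ^ a) / a ≤ Real.log (1 / δ) / a := by
  have hmul : Real.log δ + a * Real.log x ≤ Real.log (1 + δ * x ^ a) := by
    rw [← Real.log_rpow hx, ← Real.log_mul hδ.ne' (by positivity)]
    exact Real.log_le_log (by positivity) (by linarith)
  have hdiv := div_le_div_of_nonneg_right hmul ha.le
  rw [add_div, mul_div_cancel_left₀ _ ha.ne'] at hdiv
  rw [one_div, Real.log_inv, neg_div]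
  linarith

lemma integral_one_div_mul_one_add_rpow_le (ha : 0 < a) (hδ : 0 < δ) {b : ℝ} (hb : 1 ≤ b) :
    ∫ x in (1 : ℝ)..b, 1 / (x * (1 + δ * x ^ a)) ≤ (Real.log (1 / δ) + δ) / a := by
  have hx : ∀ x ∈ uIcc 1 b, 0 < x := fun x hx => by
    rw [uIcc_of_le hb] at hx
    linarith [hx.1]
  have hanti : AntitoneOn (fun x : ℝ => 1 / (x * (1 + δ * x ^ a))) (uIcc 1 b) := by
    simpa only [pow_one] using (antitoneOn_one_div_pow_mul_one_add_rpow 1 hδ.le ha.le).mono hx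
  rw [intervalIntegral.integral_eq_sub_of_hasDerivAt
    (fun x hx' => hasDerivAt_log_sub_log_one_add_rpow_div ha.ne' hδ.le (hx x hx'))
    hanti.intervalIntegrable]
  have hlog_one_add : Real.log (1 + δ) ≤ δ := by
    linarith [Real.log_le_sub_one_of_pos (by linarith : 0 < 1 + δ)]
  have hb' := log_sub_log_one_add_rpow_div_le ha hδ (zero_lt_one.trans_le hb)
  have h1 := div_le_div_of_nonneg_right hlog_one_add ha.le
  simp only [Real.log_one, Real.one_rpow, mul_one, zero_sub, add_div]
  linarith

theorem sum_Icc_one_div_mul_one_add_rpow_le (ha : 0 < a) (hδ : 0 < δ) (N : ℕ) :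
    ∑ n ∈ Finset.Icc 1 N, 1 / ((n : ℝ) * (1 + δ * (n : ℝ) ^ a))
      ≤ 1 + (Real.log (1 / δ) + δ) / a := by
  set g : ℝ → ℝ := fun x => 1 / (x * (1 + δ * x ^ a))
  have hg : AntitoneOn g (Ici 1) := by
    have := (antitoneOn_one_div_pow_mul_one_add_rpow 1 hδ.le ha.le).mono
      (Ici_subset_Ioi.mpr one_pos)
    simpa only [pow_one] using this
  cases N with
  | zero =>
    have := Real.log_le_sub_one_of_pos hδ
    rw [Finset.Icc_eq_empty (by norm_num), Finset.sum_empty, one_div, Real.log_inv]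
    linarith [div_nonneg (by linarith : 0 ≤ -Real.log δ + δ) ha.le]
  | succ M =>
    have hg1 : g 1 ≤ 1 := by
      simp only [g, Real.one_rpow, mul_one, one_mul]
      exact div_le_one_of_le₀ (by linarith) (by linarith)
    calc ∑ n ∈ Finset.Icc 1 (M + 1), g n
        = g 1 + ∑ i ∈ Finset.Ico 1 (M + 1), g ↑(i + 1) := by
          rw [← Finset.Ico_add_one_right_eq_Icc, Finset.sum_eq_sum_Ico_succ_bot (by omega),
            Finset.sum_Ico_add' (fun n : ℕ => g n)]
          norm_num
      _ ≤ 1 + ∫ x in (1 : ℝ)..(M + 1 : ℕ), g x := by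
          gcongr
          have hIcc : AntitoneOn g (Icc ((1 : ℕ) : ℝ) ((M + 1 : ℕ) : ℝ)) :=
            hg.mono (by rw [Nat.cast_one]; exact Icc_subset_Ici_self)
          simpa using hIcc.sum_le_integral_Ico (by omega)
      _ ≤ 1 + (Real.log (1 / δ) + δ) / a := by
          gcongr
          exact integral_one_div_mul_one_add_rpow_le ha hδ (by simp)

end Series

section Lattice

def boxIndex (k : Z2) : ℕ := max k.val.1.natAbs k.val.2.natAbs

lemma one_le_boxIndex (k : Z2) : 1 ≤ boxIndex k :=
  Nat.one_le_iff_ne_zero.mpr fun h =>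
    k.2 ((Finset.eq_zero_iff_eq_zero_of_mem_box (Int.mem_box.mpr h)).mpr rfl)

lemma boxIndex_le_knorm (k : Z2) : (boxIndex k : ℝ) ≤ knorm k := by
  rw [knorm, Real.le_sqrt (Nat.cast_nonneg _) (by positivity), boxIndex, Nat.cast_max,
    Nat.cast_natAbs, Nat.cast_natAbs]
  rcases max_cases (|(k.val.1 : ℝ)|) (|(k.val.2 : ℝ)|) with ⟨h, _⟩ | ⟨h, _⟩ <;>
  · push_cast at h ⊢
    rw [h, sq_abs]
    nlinarith [sq_nonneg (k.val.1 : ℝ), sq_nonneg (k.val.2 : ℝ)]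

lemma one_le_knorm (k : Z2) : 1 ≤ knorm k :=
  (Nat.one_le_cast.mpr (one_le_boxIndex k)).trans (boxIndex_le_knorm k)

lemma card_filter_boxIndex_eq_le (u : Finset Z2) {n : ℕ} (hn : n ≠ 0) :
    (u.filter (boxIndex · = n)).card ≤ 8 * n := by
  rw [← Int.card_box hn]
  exact Finset.card_le_card_of_injOn Subtype.val
    (fun k hk => Int.mem_box.mpr (Finset.mem_filter.1 hk).2) Subtype.val_injective.injOn

variable {F : ℝ → ℝ}

lemma sum_le_sum_Icc_boxIndex (hF : AntitoneOn F (Ici 1)) (hF₀ : ∀ x ∈ Ici 1, 0 ≤ F x)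
    (u : Finset Z2) :
    ∑ k ∈ u, F (knorm k) ≤ 8 * ∑ n ∈ Finset.Icc 1 (u.sup boxIndex), n * F n := by
  set N := u.sup boxIndex
  have hmaps : ∀ k ∈ u, boxIndex k ∈ Finset.Icc 1 N := fun k hk =>
    Finset.mem_Icc.mpr ⟨one_le_boxIndex k, Finset.le_sup hk⟩
  have hone : ∀ k, (1 : ℝ) ≤ boxIndex k := fun k => by exact_mod_cast one_le_boxIndex k
  calc ∑ k ∈ u, F (knorm k)
      ≤ ∑ k ∈ u, F (boxIndex k) := Finset.sum_le_sum fun k _ =>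
        hF (hone k) (one_le_knorm k) (boxIndex_le_knorm k)
    _ = ∑ n ∈ Finset.Icc 1 N, (u.filter (boxIndex · = n)).card * F n := by
        rw [← Finset.sum_fiberwise_of_maps_to' hmaps (fun n : ℕ => F n)]
        simp only [Finset.sum_const, nsmul_eq_mul]
    _ ≤ ∑ n ∈ Finset.Icc 1 N, (8 * n : ℕ) * F n := by
        gcongr with n hn
        · exact hF₀ _ (mem_Ici.mpr (Nat.one_le_cast.mpr (Finset.mem_Icc.mp hn).1))
        · exact card_filter_boxIndex_eq_le u (by have := (Finset.mem_Icc.mp hn).1; omega)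
    _ = 8 * ∑ n ∈ Finset.Icc 1 N, n * F n := by
        rw [Finset.mul_sum]; push_cast; simp only [mul_assoc]

theorem summable_and_tsum_le_of_sum_Icc_le (hF : AntitoneOn F (Ici 1))
    (hF₀ : ∀ x ∈ Ici 1, 0 ≤ F x) {B : ℝ} (hB : ∀ N : ℕ, ∑ n ∈ Finset.Icc 1 N, n * F n ≤ B) :
    (Summable fun k : Z2 => F (knorm k)) ∧ ∑' k : Z2, F (knorm k) ≤ 8 * B := by
  have hsum : ∀ u : Finset Z2, ∑ k ∈ u, F (knorm k) ≤ 8 * B := fun u =>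
    (sum_le_sum_Icc_boxIndex hF hF₀ u).trans (by gcongr; exact hB _)
  have hnonneg : 0 ≤ fun k : Z2 => F (knorm k) := fun k => hF₀ _ (one_le_knorm k)
  exact ⟨summable_of_sum_le hnonneg hsum, Real.tsum_le_of_sum_le hnonneg hsum⟩

end Lattice

/-- `Σ_{k∈ℤ²₀} 1/(|k|²(1+δ|k|^{2γ})) ≤ C(1 + log(1/δ))` for all `δ ∈ (0,1]`,
the sum being finite for every such `δ`. -/
theorem stmt7 (γ : ℝ) (hγ : 0 < γ) :
    ∃ C : ℝ, 0 < C ∧ ∀ δ ∈ Ioc (0 : ℝ) 1,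
      (Summable fun k : Z2 => 1 / (knorm k ^ 2 * (1 + δ * knorm k ^ (2 * γ)))) ∧
      ∑' k : Z2, 1 / (knorm k ^ 2 * (1 + δ * knorm k ^ (2 * γ)))
        ≤ C * (1 + Real.log (1 / δ)) := by
  have ha : 0 < 2 * γ := by linarith
  refine ⟨8 * (1 + (2 * γ)⁻¹), by positivity, fun δ ⟨hδ, hδ1⟩ => ?_⟩
  set F : ℝ → ℝ := fun x => 1 / (x ^ 2 * (1 + δ * x ^ (2 * γ)))
  have hF : AntitoneOn F (Ici 1) :=
    (antitoneOn_one_div_pow_mul_one_add_rpow 2 hδ.le ha.le).mono (Ici_subset_Ioi.mpr one_pos)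
  have hF₀ : ∀ x ∈ Ici 1, 0 ≤ F x := fun x (hx : 1 ≤ x) => by
    have : 0 ≤ x := by linarith
    positivity
  have hB (N : ℕ) : ∑ n ∈ Finset.Icc 1 N, n * F n ≤ 1 + (Real.log (1 / δ) + δ) / (2 * γ) := by
    refine le_of_eq_of_le (Finset.sum_congr rfl fun n hn => ?_)
      (sum_Icc_one_div_mul_one_add_rpow_le ha hδ N)
    have : (n : ℝ) ≠ 0 := by have := (Finset.mem_Icc.mp hn).1; positivity
    simp only [F]
    field_simp
  obtain ⟨hsum, hle⟩ := summable_and_tsum_le_of_sum_Icc_le hF hF₀ hB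
  refine ⟨hsum, hle.trans ?_⟩
  have hL : 0 ≤ Real.log (1 / δ) := Real.log_nonneg (one_le_one_div hδ hδ1)
  have hδL : (Real.log (1 / δ) + δ) / (2 * γ) ≤ (2 * γ)⁻¹ * (1 + Real.log (1 / δ)) := by
    rw [div_eq_inv_mul]
    exact mul_le_mul_of_nonneg_left (by linarith) (by positivity)
  nlinarith [inv_pos.mpr ha]
end
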